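/- Let η_k : C → [0,r] and h_k : C → ℝ (k ∈ ℕ) be arbitrary maps, let b : ℝ → ℝ be continuous with |b(s)| ≤ C₁|s| + C₂ for all s (C₁, C₂ ≥ 0), and let φ, ψ ∈ C be such that Σ_k |h_k(ψ) − h_k(φ)| < ∞. Then the function K₂(x) := Σ_k ( ∫_Ω b(φ(−η_k(ψ))(y)) f(x−y) dy ) · ( h_k(ψ) − h_k(φ) ) belongs to L²(Ω) and satisfies ‖K₂‖_{L²(Ω)} ≤ M_f ( C₁ |Ω| ‖φ‖_C + C₂ |Ω|^{3/2} ) · Σ_k | h_k(ψ) − h_k(φ) |. -/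

import Mathlib

/-! Every coefficient `x ↦ ∫_Ω b(φ(θ)(y)) f(x - y) dy` is bounded by `M_f ‖b ∘ φ(θ)‖_{L¹}`, and by
linear growth and Hölder `‖b ∘ φ(θ)‖_{L¹} ≤ C₁ |Ω|^{1/2} ‖φ‖_C + C₂ |Ω|`. So `K₂` is a measurable
function bounded by `M_f (C₁ |Ω|^{1/2} ‖φ‖_C + C₂ |Ω|) Σ_k |h_k(ψ) - h_k(φ)|`, and on a set of
finite measure its `L²` norm is at most `|Ω|^{1/2}` times this bound. -/

open MeasureTheory Set Filter

theorem summable_mul_of_abs_le {ι : Type*} {F c : ι → ℝ} {A : ℝ} (hF : ∀ k, |F k| ≤ A)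
    (hc : Summable fun k => |c k|) : Summable fun k => F k * c k :=
  Summable.of_norm_bounded (hc.mul_left A) fun k => by
    rw [Real.norm_eq_abs, abs_mul]
    exact mul_le_mul_of_nonneg_right (hF k) (abs_nonneg _)

theorem abs_tsum_mul_le_of_abs_le {ι : Type*} {F c : ι → ℝ} {A : ℝ} (hF : ∀ k, |F k| ≤ A)
    (hc : Summable fun k => |c k|) : |∑' k, F k * c k| ≤ A * ∑' k, |c k| :=
  tsum_of_norm_bounded (hc.hasSum.mul_left A) fun k => by
    rw [Real.norm_eq_abs, abs_mul]
    exact mul_le_mul_of_nonneg_right (hF k) (abs_nonneg _)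

section

variable {α : Type*} [MeasurableSpace α] {μ : Measure α}

theorem integral_norm_le_measureReal_univ_rpow_mul_norm [IsFiniteMeasure μ]
    {E : Type*} [NormedAddCommGroup E] {p : ENNReal} [Fact (1 ≤ p)] (u : Lp E p μ) :
    ∫ x, ‖u x‖ ∂μ ≤ μ.real univ ^ (1 - p.toReal⁻¹) * ‖u‖ := by
  have h := eLpNorm_le_eLpNorm_mul_rpow_measure_univ (μ := μ) (Fact.out : 1 ≤ p)
    (Lp.aestronglyMeasurable u)
  have hexp : 0 ≤ 1 - p.toReal⁻¹ := by
    rcases eq_or_ne p ⊤ with rfl | hp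
    · simp
    · exact sub_nonneg.2 (inv_le_one_of_one_le₀ (by
        simpa using ENNReal.toReal_mono hp (Fact.out : 1 ≤ p)))
  calc ∫ x, ‖u x‖ ∂μ = (eLpNorm u 1 μ).toReal := by
        rw [integral_norm_eq_lintegral_enorm (Lp.aestronglyMeasurable u),
          eLpNorm_one_eq_lintegral_enorm]
    _ ≤ (eLpNorm u p μ * μ univ ^ (1 - p.toReal⁻¹)).toReal :=
        ENNReal.toReal_mono (ENNReal.mul_ne_top (Lp.eLpNorm_ne_top u)
          (ENNReal.rpow_ne_top_of_nonneg hexp (measure_ne_top μ univ))) (by simpa using h)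
    _ = μ.real univ ^ (1 - p.toReal⁻¹) * ‖u‖ := by
        rw [ENNReal.toReal_mul, ← ENNReal.toReal_rpow, mul_comm, Lp.norm_def, measureReal_def]

theorem aestronglyMeasurable_tsum {E : Type*} [NormedAddCommGroup E] {f : ℕ → α → E}
    (hf : ∀ n, AEStronglyMeasurable (f n) μ) (hs : ∀ᵐ x ∂μ, Summable fun n => f n x) :
    AEStronglyMeasurable (fun x => ∑' n, f n x) μ :=
  aestronglyMeasurable_of_tendsto_ae atTop
    (fun _ => Finset.aestronglyMeasurable_fun_sum _ fun k _ => hf k)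
    (hs.mono fun _ hx => hx.hasSum.tendsto_sum_nat)

theorem abs_integral_mul_le_of_abs_le {g k : α → ℝ} {M : ℝ} (hg : Integrable g μ)
    (hk : ∀ y, |k y| ≤ M) : |∫ y, g y * k y ∂μ| ≤ M * ∫ y, |g y| ∂μ :=
  calc |∫ y, g y * k y ∂μ| ≤ ∫ y, M * |g y| ∂μ :=
        norm_integral_le_of_norm_le (hg.abs.const_mul M) (ae_of_all _ fun y => by
          rw [Real.norm_eq_abs, abs_mul, mul_comm]
          exact mul_le_mul_of_nonneg_right (hk y) (abs_nonneg _))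
    _ = M * ∫ y, |g y| ∂μ := integral_const_mul M _

theorem aestronglyMeasurable_integral_mul_kernel {β : Type*} [MeasurableSpace β]
    {ν : Measure β} [SFinite μ] {g : α → ℝ} {κ : β → α → ℝ} (hg : AEStronglyMeasurable g μ)
    (hκ : AEStronglyMeasurable (Function.uncurry κ) (ν.prod μ)) :
    AEStronglyMeasurable (fun x => ∫ y, g y * κ x y ∂μ) ν :=
  (hg.comp_snd.mul hκ).integral_prod_right'

variable [IsFiniteMeasure μ] {b : ℝ → ℝ} {C₁ C₂ : ℝ}

theorem MeasureTheory.Integrable.comp_of_abs_le_linear (hb : Measurable b)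
    (hbgrowth : ∀ s, |b s| ≤ C₁ * |s| + C₂) {u : α → ℝ} (hu : Integrable u μ) :
    Integrable (fun x => b (u x)) μ :=
  Integrable.mono' ((hu.abs.const_mul C₁).add (integrable_const C₂))
    (hb.comp_aemeasurable hu.aemeasurable).aestronglyMeasurable
    (ae_of_all _ fun x => hbgrowth (u x))

theorem MeasureTheory.Integrable.integral_abs_comp_le_of_abs_le_linear (hb : Measurable b)
    (hbgrowth : ∀ s, |b s| ≤ C₁ * |s| + C₂) {u : α → ℝ} (hu : Integrable u μ) :
    ∫ x, |b (u x)| ∂μ ≤ C₁ * ∫ x, |u x| ∂μ + C₂ * μ.real univ :=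
  calc ∫ x, |b (u x)| ∂μ ≤ ∫ x, C₁ * |u x| + C₂ ∂μ :=
        integral_mono (hu.comp_of_abs_le_linear hb hbgrowth).abs
          ((hu.abs.const_mul C₁).add (integrable_const C₂)) fun x => hbgrowth (u x)
    _ = C₁ * ∫ x, |u x| ∂μ + C₂ * μ.real univ := by
      rw [integral_add (hu.abs.const_mul C₁) (integrable_const C₂), integral_const_mul,
        integral_const, smul_eq_mul, mul_comm C₂]

theorem MeasureTheory.Lp.integral_abs_comp_le_of_abs_le_linear {p : ENNReal} [Fact (1 ≤ p)]
    (hb : Measurable b) (hC₁ : 0 ≤ C₁) (hbgrowth : ∀ s, |b s| ≤ C₁ * |s| + C₂) (u : Lp ℝ p μ) :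
    ∫ x, |b (u x)| ∂μ ≤ C₁ * (μ.real univ ^ (1 - p.toReal⁻¹) * ‖u‖) + C₂ * μ.real univ :=
  (((Lp.memLp u).integrable Fact.out).integral_abs_comp_le_of_abs_le_linear hb hbgrowth).trans
    (by
      gcongr
      simpa only [Real.norm_eq_abs] using integral_norm_le_measureReal_univ_rpow_mul_norm u)

end

section KernelSeries

variable {α β : Type*} [MeasurableSpace α] [MeasurableSpace β] {ν : Measure β} {μ : Measure α}
  [IsFiniteMeasure ν] [SFinite μ] {g : ℕ → α → ℝ} {κ : β → α → ℝ} {c : ℕ → ℝ} {A : ℝ}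

theorem memLp_tsum_integral_mul_kernel_and_eLpNorm_le (p : ENNReal)
    (hg : ∀ k, AEStronglyMeasurable (g k) μ)
    (hκ : AEStronglyMeasurable (Function.uncurry κ) (ν.prod μ))
    (hA : ∀ k x, |∫ y, g k y * κ x y ∂μ| ≤ A) (hc : Summable fun k => |c k|) :
    MemLp (fun x => ∑' k, (∫ y, g k y * κ x y ∂μ) * c k) p ν ∧
      eLpNorm (fun x => ∑' k, (∫ y, g k y * κ x y ∂μ) * c k) p ν ≤
        ν univ ^ p.toReal⁻¹ * ENNReal.ofReal (A * ∑' k, |c k|) := by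
  have hbound : ∀ x, ‖∑' k, (∫ y, g k y * κ x y ∂μ) * c k‖ ≤ A * ∑' k, |c k| := fun x =>
    abs_tsum_mul_le_of_abs_le (fun k => hA k x) hc
  have hmeas : AEStronglyMeasurable (fun x => ∑' k, (∫ y, g k y * κ x y ∂μ) * c k) ν :=
    aestronglyMeasurable_tsum
      (fun k => (aestronglyMeasurable_integral_mul_kernel (hg k) hκ).mul_const _)
      (ae_of_all _ fun x => summable_mul_of_abs_le (fun k => hA k x) hc)
  exact ⟨MemLp.of_bound hmeas _ (ae_of_all _ hbound),
    eLpNorm_le_of_ae_bound (ae_of_all _ hbound)⟩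

end KernelSeries

/-- estimate for the term `K₂ⁿ` in the proof of Lemma 1: For arbitrary
delay functions `η_k : C → [0,r]` and jump heights `h_k : C → ℝ`, `b` continuous with
linear growth `|b(s)| ≤ C₁|s| + C₂`, and `φ, ψ ∈ C` with `Σ_k |h_k(ψ) − h_k(φ)| < ∞`,
the function `K₂(x) = Σ_k (∫_Ω b(φ(−η_k(ψ))(y)) f(x−y) dy)(h_k(ψ) − h_k(φ))`
belongs to `L²(Ω)` and
`‖K₂‖_{L²} ≤ M_f (C₁|Ω|‖φ‖_C + C₂|Ω|^{3/2}) Σ_k |h_k(ψ) − h_k(φ)|`. -/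
theorem stmt7
    {n₀ : ℕ} (Ω : Set (EuclideanSpace ℝ (Fin n₀)))
    (hΩbdd : Bornology.IsBounded Ω)
    (r : ℝ) (hr : 0 < r)
    (f : EuclideanSpace ℝ (Fin n₀) → ℝ) (hf : Measurable f)
    (Mf : ℝ) (hMf : ∀ z, |f z| ≤ Mf)
    (η : ℕ → C(Set.Icc (-r) (0:ℝ), Lp ℝ 2 (volume.restrict Ω)) → ℝ)
    (h : ℕ → C(Set.Icc (-r) (0:ℝ), Lp ℝ 2 (volume.restrict Ω)) → ℝ)
    (b : ℝ → ℝ) (hb : Continuous b)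
    (C₁ C₂ : ℝ) (hC₁ : 0 ≤ C₁)
    (hbgrowth : ∀ s : ℝ, |b s| ≤ C₁ * |s| + C₂)
    (φ ψ : C(Set.Icc (-r) (0:ℝ), Lp ℝ 2 (volume.restrict Ω)))
    (hsum : Summable (fun k => |h k ψ - h k φ|)) :
    MemLp (fun x => ∑' k : ℕ,
        (∫ y in Ω, b (φ (Set.projIcc (-r) 0 (by linarith) (-(η k ψ))) y) * f (x - y)) *
          (h k ψ - h k φ))
      2 (volume.restrict Ω) ∧
    eLpNorm (fun x => ∑' k : ℕ,
        (∫ y in Ω, b (φ (Set.projIcc (-r) 0 (by linarith) (-(η k ψ))) y) * f (x - y)) *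
          (h k ψ - h k φ))
        2 (volume.restrict Ω)
      ≤ ENNReal.ofReal (Mf * (C₁ * (volume Ω).toReal * ‖φ‖ +
          C₂ * (volume Ω).toReal ^ ((3:ℝ)/2)) * ∑' k : ℕ, |h k ψ - h k φ|) := by
  have hvol : volume Ω ≠ ⊤ := hΩbdd.measure_lt_top.ne
  have : IsFiniteMeasure (volume.restrict Ω) := isFiniteMeasure_restrict.2 hvol
  set v := (volume Ω).toReal
  have hv : 0 ≤ v := ENNReal.toReal_nonneg
  have hB : ∀ θ, ∫ y in Ω, |b (φ θ y)| ≤ C₁ * (v ^ (2:ℝ)⁻¹ * ‖φ‖) + C₂ * v := fun θ => by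
    have hL1 := Lp.integral_abs_comp_le_of_abs_le_linear hb.measurable hC₁ hbgrowth (φ θ)
    rw [measureReal_restrict_apply_univ, measureReal_def,
      show 1 - (2 : ENNReal).toReal⁻¹ = 2⁻¹ by norm_num] at hL1
    exact hL1.trans (by gcongr; exact φ.norm_coe_le_norm θ)
  have hA : ∀ θ x, |∫ y in Ω, b (φ θ y) * f (x - y)| ≤
      Mf * (C₁ * (v ^ (2:ℝ)⁻¹ * ‖φ‖) + C₂ * v) := fun θ x =>
    (abs_integral_mul_le_of_abs_le ((Lp.memLp (φ θ)).integrable one_le_two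
      |>.comp_of_abs_le_linear hb.measurable hbgrowth) fun y => hMf (x - y)).trans
      (mul_le_mul_of_nonneg_left (hB θ) ((abs_nonneg _).trans (hMf 0)))
  obtain ⟨hmem, hle⟩ := memLp_tsum_integral_mul_kernel_and_eLpNorm_le (ν := volume.restrict Ω)
    (g := fun k y => b (φ (Set.projIcc (-r) 0 (by linarith) (-(η k ψ))) y))
    (κ := fun x y => f (x - y)) 2
    (fun _ => hb.comp_aestronglyMeasurable (Lp.aestronglyMeasurable _))
    (hf.comp (measurable_fst.sub measurable_snd)).aestronglyMeasurable (fun _ => hA _) hsum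
  refine ⟨hmem, hle.trans_eq ?_⟩
  have hsqrt : v ^ (2:ℝ)⁻¹ * v ^ (2:ℝ)⁻¹ = v := by
    rw [← Real.rpow_add' hv (by norm_num)]; norm_num
  have hpow : v ^ (2:ℝ)⁻¹ * v = v ^ ((3:ℝ)/2) := by
    rw [← Real.rpow_add_one' hv (by norm_num)]; norm_num
  rw [Measure.restrict_apply_univ, ← ENNReal.ofReal_toReal hvol, ENNReal.toReal_ofNat,
    ENNReal.ofReal_rpow_of_nonneg hv (by norm_num), ← ENNReal.ofReal_mul (by positivity)]
  congr 1
  linear_combination (Mf * C₁ * ‖φ‖ * hsqrt + Mf * C₂ * hpow) * ∑' k, |h k ψ - h k φ|
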